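/- Fix γ ∈ (0,1) and let σ : ℝ → ℝ be the leaky-ReLU σ(t) = t for t > 0 and σ(t) = γt for t ≤ 0. For α > 0 define φ_α : ℝ² → ℝ by φ_α(X) = σ(X₁ + X₂) − σ(X₁ + (1+α)X₂). Then: (i) for every Borel probability measure μ on ℝ² that is absolutely continuous with respect to Lebesgue measure, lim_{α → 0⁺} ∫ ‖∇φ_α(X)‖² dμ(X) = 0 (the gradient exists μ-almost everywhere); and (ii) for every α > 0, the Lipschitz constant of φ_α satisfies ‖φ_α‖_Lip² ≥ (1−γ)² + (1+α−γ)², so in particular ‖φ_α‖_Lip does not tend to 0 as α → 0⁺. Hence controlling the expected squared gradient norm under μ does not control the Lipschitz constant. -/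

import Mathlib

open MeasureTheory Filter
open scoped Topology

noncomputable section

/-- Leaky-ReLU with leak coefficient `γ`: `σ(t) = t` for `t > 0` and `γt` for `t ≤ 0`. -/
def lrelu (γ t : ℝ) : ℝ := if 0 < t then t else γ * t

/-- The two-layer network `φ_α(X) = σ(X₁ + X₂) − σ(X₁ + (1+α)X₂)` of the paper's
condition-number counterexample (first-layer weights `[[1,1],[1,1+α]]`). -/
def phiA (γ a : ℝ) (X : EuclideanSpace ℝ (Fin 2)) : ℝ :=
  lrelu γ (X 0 + X 1) - lrelu γ (X 0 + (1 + a) * X 1)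

/-- The Lipschitz constant `‖f‖_Lip = sup_{x ≠ y} |f x − f y|/‖x − y‖`. -/
def lipConst {E : Type*} [NormedAddCommGroup E] (f : E → ℝ) : ℝ :=
  sSup {r : ℝ | ∃ x y : E, x ≠ y ∧ r = |f x - f y| / ‖x - y‖}

/-!
Write `φ_α X = σ ⟪w₁, X⟫ - σ ⟪w₂, X⟫` with `w₁ = (1, 1)` and `w₂ = (1, 1 + α)`. Off the two lines
`⟪wᵢ, X⟫ = 0` its gradient is `σ'(⟪w₁, X⟫) w₁ - σ'(⟪w₂, X⟫) w₂`. If `X₁ + X₂ ≠ 0`, which holds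
`μ`-almost everywhere, both slopes agree once `α` is small, and the gradient is then a multiple of
`w₁ - w₂ = (0, -α)`. Since `φ_α` is `(‖w₁‖ + ‖w₂‖)`-Lipschitz, its gradient is bounded uniformly
in `α ≤ 1`, and dominated convergence gives (i). At `X = (-2 - α, 2)` the two pre-activations are
`-α < 0 < α`, the slopes are `γ` and `1`, and the gradient there has squared norm
`(1 - γ)² + (1 + α - γ)²`. A gradient never exceeds the Lipschitz constant, which therefore stays
above `1 - γ`.
-/

open scoped RealInnerProductSpace NNReal

def lreluSlope (γ t : ℝ) : ℝ := if 0 < t then 1 else γ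

section LeakyReLU

variable {γ : ℝ}

lemma lrelu_lipschitzWith (hγ : |γ| ≤ 1) : LipschitzWith 1 (lrelu γ) := by
  refine LipschitzWith.of_dist_le_mul fun s t => ?_
  rw [abs_le] at hγ
  simp only [Real.dist_eq, NNReal.coe_one, one_mul, lrelu]
  split_ifs with hs ht ht <;> rw [abs_le] <;> constructor <;>
    nlinarith [le_abs_self (s - t), neg_abs_le (s - t)]

lemma hasDerivAt_lrelu {t : ℝ} (ht : t ≠ 0) : HasDerivAt (lrelu γ) (lreluSlope γ t) t := by
  rcases ht.lt_or_gt with ht | ht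
  · have hloc : lrelu γ =ᶠ[𝓝 t] fun s => γ * s :=
      (eventually_lt_nhds ht).mono fun s hs => if_neg hs.not_gt
    simpa [lreluSlope, ht.not_gt] using ((hasDerivAt_id t).const_mul γ).congr_of_eventuallyEq hloc
  · have hloc : lrelu γ =ᶠ[𝓝 t] id :=
      (eventually_gt_nhds ht).mono fun s hs => if_pos hs
    simpa [lreluSlope, ht] using (hasDerivAt_id t).congr_of_eventuallyEq hloc

lemma eventually_lreluSlope_eq {t : ℝ} (ht : t ≠ 0) :
    ∀ᶠ s in 𝓝 t, s ≠ 0 ∧ lreluSlope γ s = lreluSlope γ t := by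
  rcases ht.lt_or_gt with ht | ht
  · filter_upwards [eventually_lt_nhds ht] with s hs
    simp [lreluSlope, hs.ne, hs.not_gt, ht.not_gt]
  · filter_upwards [eventually_gt_nhds ht] with s hs
    simp [lreluSlope, hs.ne', hs, ht]

end LeakyReLU

section LipConst

variable {E : Type*} [NormedAddCommGroup E]

lemma lipConst_nonneg (f : E → ℝ) : 0 ≤ lipConst f :=
  Real.sSup_nonneg fun _ ⟨_, _, _, hr⟩ => hr ▸ by positivity

lemma LipschitzWith.lipschitzWith_lipConst {f : E → ℝ} {K : ℝ≥0} (hf : LipschitzWith K f) :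
    LipschitzWith ⟨lipConst f, lipConst_nonneg f⟩ f := by
  have hbdd : BddAbove {r : ℝ | ∃ x y : E, x ≠ y ∧ r = |f x - f y| / ‖x - y‖} := by
    refine ⟨K, ?_⟩
    rintro _ ⟨x, y, -, rfl⟩
    refine div_le_of_le_mul₀ (norm_nonneg _) K.coe_nonneg ?_
    simpa [Real.dist_eq, dist_eq_norm] using hf.dist_le_mul x y
  refine LipschitzWith.of_dist_le_mul fun x y => ?_
  rcases eq_or_ne x y with rfl | hxy
  · simp
  · have hle := le_csSup hbdd ⟨x, y, hxy, rfl⟩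
    rw [div_le_iff₀ (norm_pos_iff.2 (sub_ne_zero.2 hxy))] at hle
    rw [Real.dist_eq, dist_eq_norm x y]
    exact hle

end LipConst

section Gradient

variable {F : Type*} [NormedAddCommGroup F] [InnerProductSpace ℝ F]

lemma HasGradientAt.sub [CompleteSpace F] {f g : F → ℝ} {f' g' x : F}
    (hf : HasGradientAt f f' x) (hg : HasGradientAt g g' x) :
    HasGradientAt (fun y => f y - g y) (f' - g') x := by
  rw [hasGradientAt_iff_hasFDerivAt, map_sub] at *
  exact hf.sub hg

lemma hasGradientAt_lrelu_inner [CompleteSpace F] {γ : ℝ} {w x : F} (hx : ⟪w, x⟫ ≠ 0) :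
    HasGradientAt (fun y => lrelu γ ⟪w, y⟫) (lreluSlope γ ⟪w, x⟫ • w) x := by
  rw [hasGradientAt_iff_hasFDerivAt]
  refine ((hasDerivAt_lrelu hx).comp_hasFDerivAt x (innerSL ℝ w).hasFDerivAt).congr_fderiv ?_
  ext y
  simp

lemma norm_gradient_eq_norm_fderiv [CompleteSpace F] (f : F → ℝ) (x : F) :
    ‖gradient f x‖ = ‖fderiv ℝ f x‖ :=
  (InnerProductSpace.toDual ℝ F).symm.norm_map _

lemma measurable_norm_gradient [CompleteSpace F] [MeasurableSpace F] [OpensMeasurableSpace F]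
    (f : F → ℝ) :
    Measurable fun x => ‖gradient f x‖ := by
  simpa only [norm_gradient_eq_norm_fderiv] using (measurable_fderiv ℝ f).norm

lemma norm_gradient_le_of_lipschitzWith [CompleteSpace F] {f : F → ℝ} {K : ℝ≥0}
    (hf : LipschitzWith K f) (x : F) : ‖gradient f x‖ ≤ K :=
  norm_gradient_eq_norm_fderiv f x ▸ norm_fderiv_le_of_lipschitz ℝ hf

lemma norm_gradient_le_lipConst [CompleteSpace F] {f : F → ℝ} {K : ℝ≥0}
    (hf : LipschitzWith K f) (x : F) : ‖gradient f x‖ ≤ lipConst f :=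
  norm_gradient_le_of_lipschitzWith hf.lipschitzWith_lipConst x

lemma lipschitzWith_lrelu_inner {γ : ℝ} (hγ : |γ| ≤ 1) (w : F) :
    LipschitzWith ‖w‖₊ fun y => lrelu γ ⟪w, y⟫ := by
  have hnorm : ‖innerSL ℝ w‖₊ = ‖w‖₊ := Subtype.ext (innerSL_apply_norm ℝ w)
  have h := (lrelu_lipschitzWith hγ).comp (innerSL ℝ w).lipschitz
  rwa [hnorm, one_mul] at h

lemma ae_inner_ne_zero [FiniteDimensional ℝ F] [MeasurableSpace F] [BorelSpace F]
    {μ ν : Measure F} [ν.IsAddHaarMeasure] (hμ : μ ≪ ν) {w : F} (hw : w ≠ 0) :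
    ∀ᵐ x ∂μ, ⟪w, x⟫ ≠ 0 := by
  have hker : LinearMap.ker (innerₛₗ ℝ w) ≠ ⊤ := LinearMap.ker_eq_top.not.2 fun h =>
    hw (by simpa using LinearMap.congr_fun h w)
  rw [ae_iff]
  simp only [not_not]
  exact hμ (Measure.addHaar_submodule ν _ hker)

end Gradient

section Network

local notation "ℝ²" => EuclideanSpace ℝ (Fin 2)

variable {γ a : ℝ}

lemma inner_euclideanSpace_two (c : ℝ) (X : ℝ²) : ⟪!₂[1, c], X⟫ = X 0 + c * X 1 := by
  simp [PiLp.inner_apply, Fin.sum_univ_two, mul_comm]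

lemma norm_euclideanSpace_two_sq (x y : ℝ) : ‖!₂[x, y]‖ ^ 2 = x ^ 2 + y ^ 2 := by
  simp [EuclideanSpace.real_norm_sq_eq, Fin.sum_univ_two]

lemma phiA_eq_inner (γ a : ℝ) :
    phiA γ a = fun X => lrelu γ ⟪!₂[1, 1], X⟫ - lrelu γ ⟪!₂[1, 1 + a], X⟫ := by
  ext X
  simp only [phiA, inner_euclideanSpace_two, one_mul]

lemma phiA_lipschitzWith (hγ : |γ| ≤ 1) (a : ℝ) :
    LipschitzWith (‖!₂[(1 : ℝ), 1]‖₊ + ‖!₂[1, 1 + a]‖₊) (phiA γ a) := by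
  rw [phiA_eq_inner]
  exact (lipschitzWith_lrelu_inner hγ _).sub (lipschitzWith_lrelu_inner hγ _)

lemma norm_gradient_phiA_sq_le (hγ : |γ| ≤ 1) (a : ℝ) (X : ℝ²) :
    ‖gradient (phiA γ a) X‖ ^ 2 ≤ 2 * (2 + (1 + (1 + a) ^ 2)) := by
  have hle := norm_gradient_le_of_lipschitzWith (phiA_lipschitzWith hγ a) X
  have h₁ := norm_euclideanSpace_two_sq 1 1
  have h₂ := norm_euclideanSpace_two_sq 1 (1 + a)
  push_cast at hle
  nlinarith [norm_nonneg (gradient (phiA γ a) X), norm_nonneg !₂[(1 : ℝ), 1],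
    norm_nonneg !₂[1, 1 + a], sq_nonneg (‖!₂[(1 : ℝ), 1]‖ - ‖!₂[1, 1 + a]‖)]

lemma hasGradientAt_phiA {X : ℝ²} (hu : X 0 + X 1 ≠ 0) (hv : X 0 + (1 + a) * X 1 ≠ 0) :
    HasGradientAt (phiA γ a)
      !₂[lreluSlope γ (X 0 + X 1) - lreluSlope γ (X 0 + (1 + a) * X 1),
        lreluSlope γ (X 0 + X 1) - (1 + a) * lreluSlope γ (X 0 + (1 + a) * X 1)] X := by
  rw [← one_mul (X 1)] at hu
  rw [← inner_euclideanSpace_two] at hu hv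
  rw [phiA_eq_inner]
  convert (hasGradientAt_lrelu_inner (γ := γ) hu).sub (hasGradientAt_lrelu_inner hv) using 1
  ext i
  fin_cases i
  · simp [inner_euclideanSpace_two]
  · simp [inner_euclideanSpace_two]
    ring

lemma norm_gradient_phiA_sq {X : ℝ²} (hu : X 0 + X 1 ≠ 0) (hv : X 0 + (1 + a) * X 1 ≠ 0) :
    ‖gradient (phiA γ a) X‖ ^ 2 =
      (lreluSlope γ (X 0 + X 1) - lreluSlope γ (X 0 + (1 + a) * X 1)) ^ 2 +
        (lreluSlope γ (X 0 + X 1) - (1 + a) * lreluSlope γ (X 0 + (1 + a) * X 1)) ^ 2 := by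
  rw [(hasGradientAt_phiA hu hv).gradient, norm_euclideanSpace_two_sq]

lemma tendsto_norm_gradient_phiA_sq (γ : ℝ) {X : ℝ²} (hX : X 0 + X 1 ≠ 0) :
    Tendsto (fun a => ‖gradient (phiA γ a) X‖ ^ 2) (𝓝 0) (𝓝 0) := by
  set s := lreluSlope γ (X 0 + X 1)
  have hv : Tendsto (fun a : ℝ => X 0 + (1 + a) * X 1) (𝓝 0) (𝓝 (X 0 + X 1)) := by
    have hcont : Continuous fun a : ℝ => X 0 + (1 + a) * X 1 := by fun_prop
    simpa using hcont.tendsto 0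
  have heq : (fun a : ℝ => s ^ 2 * a ^ 2) =ᶠ[𝓝 0] fun a => ‖gradient (phiA γ a) X‖ ^ 2 := by
    filter_upwards [hv.eventually (eventually_lreluSlope_eq (γ := γ) hX)] with a ⟨hva, hslope⟩
    rw [norm_gradient_phiA_sq hX hva, hslope]
    ring
  refine Tendsto.congr' heq ?_
  simpa using ((continuous_pow 2).const_mul (s ^ 2)).tendsto (0 : ℝ)

lemma tendsto_integral_norm_gradient_phiA_sq (hγ : |γ| ≤ 1) {μ : Measure ℝ²} [IsFiniteMeasure μ]
    (hμ : μ ≪ volume) :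
    Tendsto (fun a => ∫ X, ‖gradient (phiA γ a) X‖ ^ 2 ∂μ) (𝓝 0) (𝓝 0) := by
  have hbound : ∀ᶠ a in 𝓝 (0 : ℝ), ∀ᵐ X ∂μ, ‖‖gradient (phiA γ a) X‖ ^ 2‖ ≤ 14 := by
    filter_upwards [Ioo_mem_nhds (show (-1 : ℝ) < 0 by norm_num) one_pos] with a ha
    refine ae_of_all _ fun X => ?_
    rw [Real.norm_of_nonneg (by positivity)]
    nlinarith [norm_gradient_phiA_sq_le hγ a X, ha.1, ha.2]
  have hlim : ∀ᵐ X ∂μ, Tendsto (fun a => ‖gradient (phiA γ a) X‖ ^ 2) (𝓝 0) (𝓝 0) := by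
    have hw : (!₂[1, 1] : ℝ²) ≠ 0 := fun h => by simpa using congr_arg (· 0) h
    filter_upwards [ae_inner_ne_zero hμ hw] with X hX
    rw [inner_euclideanSpace_two, one_mul] at hX
    exact tendsto_norm_gradient_phiA_sq γ hX
  simpa using tendsto_integral_filter_of_dominated_convergence (fun _ => 14)
    (Eventually.of_forall fun a => ((measurable_norm_gradient _).pow_const 2).aestronglyMeasurable)
    hbound (integrable_const _) hlim

lemma sq_add_sq_le_lipConst_phiA_sq (hγ : |γ| ≤ 1) (ha : 0 < a) :
    (1 - γ) ^ 2 + (1 + a - γ) ^ 2 ≤ lipConst (phiA γ a) ^ 2 := by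
  set X : ℝ² := !₂[-2 - a, 2]
  have hu : X 0 + X 1 = -a := by simp [X]; ring
  have hv : X 0 + (1 + a) * X 1 = a := by simp [X]; ring
  have hgrad := norm_gradient_phiA_sq (γ := γ) (hu ▸ neg_ne_zero.2 ha.ne') (hv ▸ ha.ne')
  rw [hu, hv] at hgrad
  calc (1 - γ) ^ 2 + (1 + a - γ) ^ 2 = ‖gradient (phiA γ a) X‖ ^ 2 := by
        rw [hgrad]; simp [lreluSlope, ha, ha.not_gt]; ring
    _ ≤ lipConst (phiA γ a) ^ 2 :=
        pow_le_pow_left₀ (norm_nonneg _) (norm_gradient_le_lipConst (phiA_lipschitzWith hγ a) X) 2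

end Network

/-- For the network `φ_α` above (whose first-layer condition number
blows up as `α → 0⁺`): (i) for every absolutely continuous probability measure `μ` on
`ℝ²`, the expected squared gradient norm `∫ ‖∇φ_α‖² dμ` tends to `0` as `α → 0⁺`, yet
(ii) `‖φ_α‖²_Lip ≥ (1−γ)² + (1+α−γ)²` for every `α > 0`, so `‖φ_α‖_Lip` does not tend to
`0`: the expected gradient norm does not control the Lipschitz constant. -/
theorem expected_gradient_does_not_control_lipschitz
    (γ : ℝ) (hγ : γ ∈ Set.Ioo (0 : ℝ) 1) :
    (∀ μ : Measure (EuclideanSpace ℝ (Fin 2)), IsProbabilityMeasure μ → μ ≪ volume →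
      Tendsto (fun a : ℝ => ∫ X, ‖gradient (phiA γ a) X‖ ^ 2 ∂μ)
        (𝓝[>] (0 : ℝ)) (𝓝 0)) ∧
    (∀ a : ℝ, 0 < a →
      (1 - γ) ^ 2 + (1 + a - γ) ^ 2 ≤ (lipConst (phiA γ a)) ^ 2) ∧
    ¬ Tendsto (fun a : ℝ => lipConst (phiA γ a)) (𝓝[>] (0 : ℝ)) (𝓝 0) := by
  obtain ⟨hγ₀, hγ₁⟩ := hγ
  have hγ : |γ| ≤ 1 := abs_le.2 ⟨by linarith, hγ₁.le⟩
  have hlip (a : ℝ) (ha : 0 < a) := sq_add_sq_le_lipConst_phiA_sq hγ ha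
  refine ⟨fun μ _ hμ => ?_, hlip, fun h => ?_⟩
  · exact (tendsto_integral_norm_gradient_phiA_sq hγ hμ).mono_left nhdsWithin_le_nhds
  · obtain ⟨a, hlt, ha⟩ :=
      ((h.eventually_lt_const (sub_pos.2 hγ₁)).and self_mem_nhdsWithin).exists
    have hγa : 1 - γ ≤ lipConst (phiA γ a) :=
      (pow_le_pow_iff_left₀ (sub_pos.2 hγ₁).le (lipConst_nonneg _) two_ne_zero).1
        (by nlinarith [hlip a ha])
    linarith

end
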